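/- arXiv:2312.05916 — 3 statements merged into one kernel-verified Lean document; each statement's English description precedes it below -/
import Mathlib

section
/- Let a1, a2 ∈ [0,1], Ts > 0, λsw ≥ 0, and f* ∈ ℝ. Define the matrix A : Matrix (Fin 2) (Fin 2) ℝ by A = ![![a1, 0], ![1 − a1, a2]] and B : Matrix (Fin 2) (Fin 3) ℝ by B = ((1 − a2)/(12·Ts)) • ![![1, 1, 1], ![0, 0, 0]]. Let p : ℕ → Fin 3 → ℝ satisfy p(n)(i) ≥ 0 for all n and i, and let x : ℕ → Fin 2 → ℝ satisfy the recursion x(n+1) = A.mulVec (x n) + B.mulVec (p n). Then for every N ∈ ℕ, λsw · ∑_{n=1}^{N} (max ((A^n).mulVec (x 0) 1 − f*) 0)^2 ≤ λsw · ∑_{n=1}^{N} (max (x n 1 − f*) 0)^2. (That is, the cost d̲²_bound obtained by assuming no future switching transitions is a lower bound on the slack-variable cost incurred over the prediction horizon for any admissible future inputs.) -/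
open Matrix Finset

/-- Proposition 1: the cost obtained by assuming no future switching transitions
(the zero-input response of the IIR filter) is a lower bound on the slack-variable
cost incurred over the prediction horizon for any admissible (nonnegative) inputs. -/
theorem slack_cost_lower_bound
    (a1 a2 Ts lsw fstar : ℝ)
    (ha1 : a1 ∈ Set.Icc (0 : ℝ) 1) (ha2 : a2 ∈ Set.Icc (0 : ℝ) 1)
    (hTs : 0 < Ts) (hlsw : 0 ≤ lsw)
    (A : Matrix (Fin 2) (Fin 2) ℝ) (hA : A = !![a1, 0; 1 - a1, a2])
    (B : Matrix (Fin 2) (Fin 3) ℝ)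
    (hB : B = ((1 - a2) / (12 * Ts)) • !![1, 1, 1; 0, 0, 0])
    (p : ℕ → Fin 3 → ℝ) (hp : ∀ n i, 0 ≤ p n i)
    (x : ℕ → Fin 2 → ℝ)
    (hx : ∀ n, x (n + 1) = A.mulVec (x n) + B.mulVec (p n)) :
    ∀ N : ℕ,
      lsw * ∑ n ∈ Finset.Icc 1 N, (max ((A ^ n).mulVec (x 0) 1 - fstar) 0) ^ 2 ≤
        lsw * ∑ n ∈ Finset.Icc 1 N, (max (x n 1 - fstar) 0) ^ 2 := by
  obtain ⟨ha1l, ha1r⟩ := ha1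
  obtain ⟨ha2l, ha2r⟩ := ha2
  -- A has nonnegative entries
  have hAnn : ∀ i j, 0 ≤ A i j := by
    intro i j
    subst hA
    fin_cases i <;> fin_cases j <;> simp <;> linarith
  -- B has nonnegative entries
  have hBnn : ∀ i j, 0 ≤ B i j := by
    intro i j
    have hc : 0 ≤ (1 - a2) / (12 * Ts) := div_nonneg (by linarith) (by positivity)
    subst hB
    fin_cases i <;> fin_cases j <;> simp [hc]
  -- B.mulVec (p n) is nonnegative
  have hBp : ∀ n i, 0 ≤ B.mulVec (p n) i := by
    intro n i
    rw [Matrix.mulVec, dotProduct]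
    apply Finset.sum_nonneg
    intro j _
    exact mul_nonneg (hBnn i j) (hp n j)
  -- key: zero-input response lower-bounds the state
  have key : ∀ n i, (A ^ n).mulVec (x 0) i ≤ x n i := by
    intro n
    induction n with
    | zero => intro i; simp
    | succ n ih =>
      intro i
      have h1 : (A ^ (n + 1)).mulVec (x 0) i = A.mulVec ((A ^ n).mulVec (x 0)) i := by
        rw [pow_succ', Matrix.mulVec_mulVec]
      rw [h1, hx n]
      have h2 : A.mulVec ((A ^ n).mulVec (x 0)) i ≤ A.mulVec (x n) i := by
        simp only [Matrix.mulVec, dotProduct]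
        apply Finset.sum_le_sum
        intro j _
        exact mul_le_mul_of_nonneg_left (ih j) (hAnn i j)
      calc A.mulVec ((A ^ n).mulVec (x 0)) i ≤ A.mulVec (x n) i := h2
        _ ≤ A.mulVec (x n) i + B.mulVec (p n) i := le_add_of_nonneg_right (hBp n i)
        _ = (A.mulVec (x n) + B.mulVec (p n)) i := rfl
  intro N
  apply mul_le_mul_of_nonneg_left _ hlsw
  apply Finset.sum_le_sum
  intro n _
  have h0 : (0 : ℝ) ≤ max ((A ^ n).mulVec (x 0) 1 - fstar) 0 := le_max_right _ _
  have hle : max ((A ^ n).mulVec (x 0) 1 - fstar) 0 ≤ max (x n 1 - fstar) 0 :=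
    max_le_max (sub_le_sub_right (key n 1) fstar) le_rfl
  exact pow_le_pow_left₀ h0 hle 2
end

section
/- Fix Np ≥ 1 and let Π_S : ℝ^{4·Np} → ℝ^{4·Np} and L_S : ℝ^{4·Np} → ℝ^{Np} be as follows: indexing ℝ^{4·Np} by pairs (ℓ, j), ℓ ∈ Fin Np, j ∈ Fin 4, with switch positions u(ℓ) ∈ ℝ³ at j ∈ {0,1,2} and slack s(ℓ) at j = 3, Π_S sends U to the vector with components u(ℓ)_j − u(ℓ−1)_j at (ℓ, j), j ∈ {0,1,2} (with u(−1) := 0), and 0 at (ℓ, 3); L_S extracts the slack components. Let Q̄ be any positive semidefinite real 2Np × 2Np matrix, Υ any real 2Np × 4Np matrix, and λ_sw, λ_u > 0. Then the Hessian H_S = Υ^⊤ Q̄ Υ + λ_sw · L_S^⊤ L_S + λ_u · Π_S^⊤ Π_S is positive definite. -/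
/-!
`Υᵀ Q̄ Υ` is positive semidefinite as a congruence of `Q̄`, and
`λ_sw L_Sᵀ L_S + λ_u Π_Sᵀ Π_S` is the Gram matrix of `√λ_sw L_S` stacked on `√λ_u Π_S`,
hence positive definite as soon as `L_S` and `Π_S` have no common kernel vector.
They do not: `L_S x = 0` kills the slacks, and `Π_S x = 0` says `u(ℓ) = u(ℓ - 1)` with
`u(-1) = 0`, so every switch position vanishes by induction on `ℓ`.
-/

open Matrix

/-- The matrix of the map `Π_S`: rows indexed by `(ℓ, j)` with `j ∈ {0,1,2}` produce
`u(ℓ)_j - u(ℓ-1)_j` (with `u(-1) := 0`), and rows with `j = 3` are zero. -/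
def PiSmat (Np : ℕ) : Matrix (Fin Np × Fin 4) (Fin Np × Fin 4) ℝ :=
  Matrix.of fun q r =>
    if (q.2 : ℕ) < 3 then
      (if q = r then (1 : ℝ) else 0) +
        (if (r.1 : ℕ) + 1 = (q.1 : ℕ) ∧ r.2 = q.2 then -1 else 0)
    else 0

/-- The matrix of the map `L_S` extracting the slack components (`j = 3`). -/
def LSmat (Np : ℕ) : Matrix (Fin Np) (Fin Np × Fin 4) ℝ :=
  Matrix.of fun ℓ q => if q.1 = ℓ ∧ (q.2 : ℕ) = 3 then (1 : ℝ) else 0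

namespace Matrix

variable {m₁ m₂ n : Type*} [Fintype m₁] [Fintype m₂]

lemma transpose_fromRows_mul_fromRows (A₁ : Matrix m₁ n ℝ) (A₂ : Matrix m₂ n ℝ) :
    (fromRows A₁ A₂)ᵀ * fromRows A₁ A₂ = A₁ᵀ * A₁ + A₂ᵀ * A₂ := by
  rw [transpose_fromRows, fromCols_mul_fromRows]

lemma posDef_transpose_mul_self_add [Fintype n] (A₁ : Matrix m₁ n ℝ) (A₂ : Matrix m₂ n ℝ)
    (h : ∀ x, A₁ *ᵥ x = 0 → A₂ *ᵥ x = 0 → x = 0) : (A₁ᵀ * A₁ + A₂ᵀ * A₂).PosDef := by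
  rw [← transpose_fromRows_mul_fromRows]
  refine PosDef.conjTranspose_mul_self _
    ((injective_iff_map_eq_zero (fromRows A₁ A₂).mulVecLin).2 fun x hx => h x ?_ ?_)
  · simpa [fromRows_mulVec] using congrArg (fun v => v ∘ Sum.inl) hx
  · simpa [fromRows_mulVec] using congrArg (fun v => v ∘ Sum.inr) hx

lemma smul_transpose_mul_self {a : ℝ} (ha : 0 ≤ a) (A : Matrix m₁ n ℝ) :
    a • (Aᵀ * A) = (√a • A)ᵀ * (√a • A) := by
  rw [transpose_smul, Matrix.smul_mul, Matrix.mul_smul, smul_smul, Real.mul_self_sqrt ha]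

lemma posDef_smul_transpose_mul_self_add_smul [Fintype n]
    (A₁ : Matrix m₁ n ℝ) (A₂ : Matrix m₂ n ℝ) {a₁ a₂ : ℝ} (ha₁ : 0 < a₁) (ha₂ : 0 < a₂)
    (h : ∀ x, A₁ *ᵥ x = 0 → A₂ *ᵥ x = 0 → x = 0) :
    (a₁ • (A₁ᵀ * A₁) + a₂ • (A₂ᵀ * A₂)).PosDef := by
  rw [smul_transpose_mul_self ha₁.le, smul_transpose_mul_self ha₂.le]
  refine posDef_transpose_mul_self_add _ _ fun x h₁ h₂ => h x ?_ ?_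
  · simpa [smul_mulVec, (Real.sqrt_pos.2 ha₁).ne'] using h₁
  · simpa [smul_mulVec, (Real.sqrt_pos.2 ha₂).ne'] using h₂

end Matrix

section SwitchingMatrices

variable {Np : ℕ} (x : Fin Np × Fin 4 → ℝ)

lemma LSmat_mulVec_apply (ℓ : Fin Np) : (LSmat Np *ᵥ x) ℓ = x (ℓ, 3) := by
  simp [LSmat, mulVec, dotProduct, Fintype.sum_prod_type, Fin.sum_univ_four]

lemma PiSmat_mulVec_apply_of_val_eq_zero {ℓ : Fin Np} (hℓ : (ℓ : ℕ) = 0) {j : Fin 4}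
    (hj : (j : ℕ) < 3) : (PiSmat Np *ᵥ x) (ℓ, j) = x (ℓ, j) := by
  simp [PiSmat, mulVec, dotProduct, hj, hℓ]

lemma PiSmat_mulVec_apply_of_val_succ {ℓ ℓ' : Fin Np} (hℓ : (ℓ : ℕ) + 1 = ℓ') {j : Fin 4}
    (hj : (j : ℕ) < 3) : (PiSmat Np *ᵥ x) (ℓ', j) = x (ℓ', j) - x (ℓ, j) := by
  have hpred (r : Fin Np × Fin 4) : (r.1 : ℕ) + 1 = ℓ' ∧ r.2 = j ↔ r = (ℓ, j) := by
    simp [Prod.ext_iff, ← hℓ, Fin.ext_iff]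
  simp [PiSmat, mulVec, dotProduct, hj, add_mul, Finset.sum_add_distrib, hpred, sub_eq_add_neg]

variable {x}

lemma eq_zero_of_LSmat_mulVec_eq_zero_of_PiSmat_mulVec_eq_zero
    (hL : LSmat Np *ᵥ x = 0) (hP : PiSmat Np *ᵥ x = 0) : x = 0 := by
  have hslack (ℓ : Fin Np) : x (ℓ, 3) = 0 := by
    simpa [LSmat_mulVec_apply] using congrFun hL ℓ
  have hswitch (j : Fin 4) (hj : (j : ℕ) < 3) : ∀ n (hn : n < Np), x (⟨n, hn⟩, j) = 0 := by
    intro n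
    induction n with
    | zero =>
      intro hn
      have hfirst := congrFun hP (⟨0, hn⟩, j)
      rwa [PiSmat_mulVec_apply_of_val_eq_zero x (ℓ := ⟨0, hn⟩) rfl hj] at hfirst
    | succ n ih =>
      intro hn
      have hstep := congrFun hP (⟨n + 1, hn⟩, j)
      rwa [PiSmat_mulVec_apply_of_val_succ x (ℓ := ⟨n, by omega⟩) rfl hj, ih, sub_zero] at hstep
  funext ⟨ℓ, j⟩
  rcases Nat.lt_or_ge (j : ℕ) 3 with hj | hj
  · exact hswitch j hj ℓ ℓ.isLt
  · obtain rfl : j = 3 := by omega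
    exact hslack ℓ

end SwitchingMatrices

theorem hessian_S_posDef_general
    (Np : ℕ)
    (Qbar : Matrix (Fin Np × Fin 2) (Fin Np × Fin 2) ℝ) (hQbar : Qbar.PosSemidef)
    (Υ : Matrix (Fin Np × Fin 2) (Fin Np × Fin 4) ℝ)
    (lsw lu : ℝ) (hlsw : 0 < lsw) (hlu : 0 < lu) :
    (Υᵀ * Qbar * Υ + lsw • ((LSmat Np)ᵀ * LSmat Np) +
      lu • ((PiSmat Np)ᵀ * PiSmat Np)).PosDef := by
  have hcost : (Υᵀ * Qbar * Υ).PosSemidef := by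
    simpa using hQbar.conjTranspose_mul_mul_same Υ
  rw [add_assoc]
  exact PosDef.posSemidef_add hcost <| posDef_smul_transpose_mul_self_add_smul _ _ hlsw hlu
    fun _ => eq_zero_of_LSmat_mulVec_eq_zero_of_PiSmat_mulVec_eq_zero

/-- The Hessian `H_S = Υᵀ Q̄ Υ + λ_sw L_Sᵀ L_S + λ_u Π_Sᵀ Π_S` of the
switching-frequency limiting controller is positive definite whenever `Q̄ ⪰ 0`,
`λ_sw > 0` and `λ_u > 0`. -/
theorem hessian_S_posDef
    (Np : ℕ) (hNp : 1 ≤ Np)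
    (Qbar : Matrix (Fin Np × Fin 2) (Fin Np × Fin 2) ℝ) (hQbar : Qbar.PosSemidef)
    (Υ : Matrix (Fin Np × Fin 2) (Fin Np × Fin 4) ℝ)
    (lsw lu : ℝ) (hlsw : 0 < lsw) (hlu : 0 < lu) :
    (Υᵀ * Qbar * Υ + lsw • ((LSmat Np)ᵀ * LSmat Np) +
      lu • ((PiSmat Np)ᵀ * PiSmat Np)).PosDef :=
  hessian_S_posDef_general Np Qbar hQbar Υ lsw lu hlsw hlu
end

section
/- Let n ∈ ℕ, let V be a lower-triangular real n × n matrix (V i j = 0 whenever i < j), let Û ∈ ℝⁿ, ρ² ∈ ℝ, and l ∈ Fin n. Suppose U, U' ∈ ℝⁿ agree on the first l+1 coordinates, i.e., U j = U' j for all j ≤ l. If the partial squared distance satisfies ∑_{i ≤ l} (Û i − (V.mulVec U) i)² > ρ², then the total squared distance satisfies ‖Û − V.mulVec U'‖² > ρ². (Hence the sphere decoder may prune every candidate solution extending the first l+1 entries of U once the incremental squared distance exceeds the squared sphere radius.) -/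
open Matrix Finset

/-- Sphere-decoder pruning: if `V` is lower triangular and `U, U'` agree on the
coordinates up to `l`, then once the partial squared distance over the first
`l + 1` coordinates exceeds the squared radius `ρ²`, so does the total squared
distance of every candidate `U'` extending those entries. -/
theorem sphere_decoder_pruning
    (n : ℕ) (V : Matrix (Fin n) (Fin n) ℝ)
    (hV : ∀ i j : Fin n, i < j → V i j = 0)
    (Uhat : Fin n → ℝ) (ρsq : ℝ) (l : Fin n)
    (U U' : Fin n → ℝ) (hagree : ∀ j : Fin n, j ≤ l → U j = U' j)
    (hpartial : ρsq < ∑ i ∈ Finset.Iic l, (Uhat i - V.mulVec U i) ^ 2) :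
    ρsq < ∑ i, (Uhat i - V.mulVec U' i) ^ 2 := by
  have key : ∀ i ∈ Finset.Iic l, (Uhat i - V.mulVec U i) ^ 2
      = (Uhat i - V.mulVec U' i) ^ 2 := by
    intro i hi
    have hil : i ≤ l := Finset.mem_Iic.mp hi
    have : V.mulVec U i = V.mulVec U' i := by
      unfold Matrix.mulVec dotProduct
      refine Finset.sum_congr rfl fun j _ => ?_
      by_cases hji : j ≤ i
      · rw [hagree j (le_trans hji hil)]
      · show V i j * U j = V i j * U' j; rw [hV i j (lt_of_not_ge hji)]; ring
    rw [this]
  calc ρsq < ∑ i ∈ Finset.Iic l, (Uhat i - V.mulVec U i) ^ 2 := hpartial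
    _ = ∑ i ∈ Finset.Iic l, (Uhat i - V.mulVec U' i) ^ 2 := Finset.sum_congr rfl key
    _ ≤ ∑ i, (Uhat i - V.mulVec U' i) ^ 2 :=
        Finset.sum_le_sum_of_subset_of_nonneg (Finset.subset_univ _)
          (fun i _ _ => sq_nonneg _)
end
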